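/- For any strategy σ on a justified AJM game A: (1) any two skeletons of σ are equivalent under the preorder ⊑ (each is ⊑ the other); (2) σ is the union of all its skeletons; (3) for any skeleton φ of σ, σ is the union of all skeletons ψ with ψ ⊑ φ and φ ⊑ ψ. -/

import Mathlib

/- Justified AJM games, after Abramsky's game semantics for access control. -/

namespace AJM

inductive Pol where
  | P
  | O
deriving DecidableEq

inductive QA where
  | Q
  | Ans
deriving DecidableEq

def Pol.flip : Pol → Pol
  | .P => .O
  | .O => .P

/-- Well-bracketed strings over moves (condition (p4)). -/
inductive WB {M : Type} (lab : M → Pol × QA) (just : M → Option M) : List M → Prop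
  | nil : WB lab just []
  | wrap (a q : M) (u : List M) : (lab a).2 = QA.Ans → just a = some q →
      WB lab just u → WB lab just (q :: (u ++ [a]))
  | append (u v : List M) : WB lab just u → WB lab just v → WB lab just (u ++ v)

/-- Conditions (p1)–(p5): Opponent starts, alternation, linearity,
well-bracketing, justifiers occur before their moves. -/
def ValidSeq {M : Type} (lab : M → Pol × QA) (just : M → Option M) (s : List M) : Prop :=
  (∀ m, s.head? = some m → (lab m).1 = Pol.O) ∧
  List.Chain' (fun m m' => (lab m).1 ≠ (lab m').1) s ∧
  s.Nodup ∧
  (∃ t, s <+: t ∧ WB lab just t) ∧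
  (∀ s₁ m s₂, s = s₁ ++ m :: s₂ → ∀ m', just m = some m' → m' ∈ s₁)

/-- A justified AJM game (the data). -/
structure Game where
  M : Type
  lab : M → Pol × QA
  just : M → Option M
  pos : Set (List M)
  equiv : List M → List M → Prop

namespace Game

/-- The axioms making the data of a `Game` an actual justified AJM game. -/
structure Valid (A : Game) : Prop where
  just_wf : WellFounded fun m m' : A.M => A.just m' = some m
  just_pol : ∀ m m', A.just m = some m' → (A.lab m).1 ≠ (A.lab m').1
  just_qa : ∀ m m', A.just m = some m' → (A.lab m).2 = QA.Ans → (A.lab m').2 = QA.Q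
  ans_justified : ∀ m, (A.lab m).2 = QA.Ans → A.just m ≠ none
  pos_nonempty : A.pos.Nonempty
  pos_prefix_closed : ∀ s t : List A.M, s <+: t → t ∈ A.pos → s ∈ A.pos
  pos_valid : ∀ s ∈ A.pos, ValidSeq A.lab A.just s
  equiv_mem : ∀ s t, A.equiv s t → s ∈ A.pos ∧ t ∈ A.pos
  equiv_refl : ∀ s ∈ A.pos, A.equiv s s
  equiv_symm : ∀ s t, A.equiv s t → A.equiv t s
  equiv_trans : ∀ s t u, A.equiv s t → A.equiv t u → A.equiv s u
  equiv_lab : ∀ s t, A.equiv s t → s.map A.lab = t.map A.lab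
  equiv_prefix : ∀ s t s' t', A.equiv s t → s' <+: s → t' <+: t →
      s'.length = t'.length → A.equiv s' t'
  equiv_ext : ∀ s t a, A.equiv s t → s ++ [a] ∈ A.pos → ∃ b, A.equiv (s ++ [a]) (t ++ [b])

/-- A strategy on a game: a non-empty set of even-length positions that is
causally consistent, representation independent and deterministic. -/
structure IsStrategy (A : Game) (σ : Set (List A.M)) : Prop where
  subset_pos : σ ⊆ A.pos
  even_length : ∀ s ∈ σ, Even s.length
  nonempty : σ.Nonempty
  causal : ∀ s a b, s ++ [a, b] ∈ σ → s ∈ σ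
  repind : ∀ s t, s ∈ σ → A.equiv s t → t ∈ σ
  det : ∀ s t a b a' b', s ++ [a, b] ∈ σ → t ++ [a', b'] ∈ σ →
      A.equiv (s ++ [a]) (t ++ [a']) → A.equiv (s ++ [a, b]) (t ++ [a', b'])

/-- A skeleton of a strategy `σ`: a non-empty, causally consistent subset of
`σ` satisfying Uniformization. -/
structure IsSkeletonOf (A : Game) (φ σ : Set (List A.M)) : Prop where
  nonempty : φ.Nonempty
  subset : φ ⊆ σ
  causal : ∀ s a b, s ++ [a, b] ∈ φ → s ∈ φ
  uniformization : ∀ s a b, s ++ [a, b] ∈ σ → s ∈ φ → ∃! b', s ++ [a, b'] ∈ φ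

/-- A skeleton in the abstract sense (independently of any strategy):
a non-empty, causally consistent set of even-length positions satisfying
Functional Determinacy and Functional Representation Independence. -/
structure IsSkeleton (A : Game) (φ : Set (List A.M)) : Prop where
  subset_pos : φ ⊆ A.pos
  even_length : ∀ s ∈ φ, Even s.length
  nonempty : φ.Nonempty
  causal : ∀ s a b, s ++ [a, b] ∈ φ → s ∈ φ
  funDet : ∀ s a b c, s ++ [a, b] ∈ φ → s ++ [a, c] ∈ φ → b = c
  funRepInd : ∀ s t a b a', s ++ [a, b] ∈ φ → t ∈ φ →
      A.equiv (s ++ [a]) (t ++ [a']) →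
      ∃! b', t ++ [a', b'] ∈ φ ∧ A.equiv (s ++ [a, b]) (t ++ [a', b'])

/-- `φ• = { t | ∃ s ∈ φ, s ≈_A t }`, the saturation of `φ` under `≈_A`. -/
def dot (A : Game) (φ : Set (List A.M)) : Set (List A.M) :=
  {t | ∃ s ∈ φ, A.equiv s t}

/-- The preorder `φ ⊑ ψ` on skeletons. -/
def Subeq (A : Game) (φ ψ : Set (List A.M)) : Prop :=
  ∀ s a b s' a', s ++ [a, b] ∈ φ → s' ∈ ψ → A.equiv (s ++ [a]) (s' ++ [a']) →
    ∃ b', s' ++ [a', b'] ∈ ψ ∧ A.equiv (s ++ [a, b]) (s' ++ [a', b'])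

end Game

end AJM

/-!
Two skeletons `φ`, `ψ` of `σ` are `⊑`-related because a response `s a b ∈ φ` transports
to any `s' a' ≈ s a` with `s' ∈ ψ`: extending the equivalence by one move gives a play of `σ`
(representation independence), uniformization replaces its last move by the one `ψ` chooses,
and determinacy keeps the result equivalent. A play `s₀ ∈ σ` lies in the skeleton of all plays
of `σ` that follow one fixed response function, chosen to agree with `s₀` along `s₀`.
Conversely, if `ψ ⊑ φ` then every play of `ψ` is equivalent to a play of `φ`, by induction
along `ψ`, so `ψ ⊆ σ` by representation independence.
-/

namespace AJM

section Plays

variable {M : Type} {S : Set (List M)}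

theorem exists_eq_append_pair {t : List M} (ht : 2 ≤ t.length) : ∃ u a b, t = u ++ [a, b] := by
  have h2 : (t.drop (t.length - 2)).length = 2 := by rw [List.length_drop]; omega
  obtain ⟨a, b, hab⟩ := List.length_eq_two.1 h2
  exact ⟨t.take (t.length - 2), a, b, by rw [← hab, List.take_append_drop]⟩

theorem append_pair_inj {u t : List M} {a b c d : M} (h : u ++ [a, b] = t ++ [c, d]) :
    u = t ∧ a = c ∧ b = d := by
  obtain ⟨rfl, h⟩ := List.append_inj' h rfl
  simpa using h

theorem mem_of_prefix_of_even (hev : ∀ s ∈ S, Even s.length)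
    (hc : ∀ s a b, s ++ [a, b] ∈ S → s ∈ S) {s t : List M} (ht : t ∈ S) (hst : s <+: t)
    (hs : Even s.length) : s ∈ S := by
  obtain ⟨n, hn⟩ : ∃ n, t.length = s.length + 2 * n := by
    obtain ⟨k, hk⟩ := hev t ht
    obtain ⟨l, hl⟩ := hs
    have := hst.length_le
    exact ⟨k - l, by omega⟩
  induction n generalizing t with
  | zero => rwa [hst.eq_of_length (by omega)]
  | succ n ih =>
    obtain ⟨u, a, b, rfl⟩ := exists_eq_append_pair (by omega : 2 ≤ t.length)
    simp only [List.length_append, List.length_cons, List.length_nil] at hn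
    exact ih (hc _ _ _ ht) (List.prefix_of_prefix_length_le hst (List.prefix_append _ _) (by omega))
      (by omega)

theorem nil_mem_of_even (hev : ∀ s ∈ S, Even s.length)
    (hc : ∀ s a b, s ++ [a, b] ∈ S → s ∈ S) (hne : S.Nonempty) : [] ∈ S :=
  hne.elim fun _ ht => mem_of_prefix_of_even hev hc ht List.nil_prefix ⟨0, rfl⟩

@[elab_as_elim]
theorem induction_of_even (hev : ∀ s ∈ S, Even s.length)
    (hc : ∀ s a b, s ++ [a, b] ∈ S → s ∈ S) {P : List M → Prop} (nil : P [])
    (snoc : ∀ s a b, s ++ [a, b] ∈ S → P s → P (s ++ [a, b]))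
    {s : List M} (hs : s ∈ S) : P s := by
  obtain ⟨n, hn⟩ := hev s hs
  induction n generalizing s with
  | zero => rwa [List.eq_nil_of_length_eq_zero hn]
  | succ n ih =>
    obtain ⟨u, a, b, rfl⟩ := exists_eq_append_pair (by omega : 2 ≤ s.length)
    simp only [List.length_append, List.length_cons, List.length_nil] at hn
    exact snoc u a b hs (ih (hc _ _ _ hs) (by omega))

theorem prefix_or_eq_of_append_pair_prefix {u t : List M} {a b c d : M}
    (hu : Even u.length) (ht : Even t.length) (h : u ++ [a, b] <+: t ++ [c, d]) :
    u ++ [a, b] <+: t ∨ u ++ [a, b] = t ++ [c, d] := by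
  have hle := h.length_le
  simp only [List.length_append, List.length_cons, List.length_nil] at hle
  obtain ⟨k, hk⟩ := hu
  obtain ⟨l, hl⟩ := ht
  by_cases hlt : u.length + 2 ≤ t.length
  · exact .inl (List.prefix_of_prefix_length_le h (List.prefix_append _ _) (by simpa))
  · exact .inr (h.eq_of_length (by simp only [List.length_append, List.length_cons]; omega))

end Plays

namespace Game

variable {A : Game} {σ φ ψ : Set (List A.M)}

theorem IsStrategy.nil_mem (hσ : IsStrategy A σ) : [] ∈ σ :=
  nil_mem_of_even hσ.even_length hσ.causal hσ.nonempty

theorem IsSkeletonOf.nil_mem (hσ : IsStrategy A σ) (hφ : IsSkeletonOf A φ σ) : [] ∈ φ :=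
  nil_mem_of_even (fun s hs => hσ.even_length s (hφ.subset hs)) hφ.causal hφ.nonempty

theorem IsSkeletonOf.subeq (hA : A.Valid) (hσ : IsStrategy A σ) (hφ : IsSkeletonOf A φ σ)
    (hψ : IsSkeletonOf A ψ σ) : Subeq A φ ψ := by
  intro s a b s' a' hs hs' heq
  have hsσ : s ++ [a, b] ∈ σ := hφ.subset hs
  obtain ⟨c, hc⟩ := hA.equiv_ext _ _ b heq (by simpa using hσ.subset_pos hsσ)
  simp only [List.append_assoc, List.singleton_append] at hc
  have hcσ : s' ++ [a', c] ∈ σ := hσ.repind _ _ hsσ hc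
  obtain ⟨b', hb', -⟩ := hψ.uniformization s' a' c hcσ hs'
  have hrefl : A.equiv (s' ++ [a']) (s' ++ [a']) :=
    hA.equiv_trans _ _ _ (hA.equiv_symm _ _ heq) heq
  exact ⟨b', hb', hA.equiv_trans _ _ _ hc (hσ.det _ _ _ _ _ _ hcσ (hψ.subset hb') hrefl)⟩

theorem IsSkeletonOf.isSkeleton (hA : A.Valid) (hσ : IsStrategy A σ)
    (hφ : IsSkeletonOf A φ σ) : IsSkeleton A φ where
  subset_pos := hφ.subset.trans hσ.subset_pos
  even_length := fun s hs => hσ.even_length s (hφ.subset hs)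
  nonempty := hφ.nonempty
  causal := hφ.causal
  funDet := fun s a b c hb hc =>
    (hφ.uniformization s a b (hφ.subset hb) (hφ.causal _ _ _ hb)).unique hb hc
  funRepInd := fun s t a b a' hs ht heq => by
    obtain ⟨b', hb', heq'⟩ := hφ.subeq hA hσ hφ s a b t a' hs ht heq
    exact ⟨b', ⟨hb', heq'⟩, fun c hc =>
      (hφ.uniformization t a' c (hφ.subset hc.1) ht).unique hc.1 hb'⟩

/-- The plays of `σ` whose Player moves all follow the response function `r`. -/
def responseSkeleton (σ : Set (List A.M)) (r : List A.M → A.M → A.M) : Set (List A.M) :=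
  {t | t ∈ σ ∧ ∀ u a b, Even u.length → u ++ [a, b] <+: t → b = r u a}

theorem isSkeletonOf_responseSkeleton (hσ : IsStrategy A σ) {r : List A.M → A.M → A.M}
    (hr : ∀ u a b, u ++ [a, b] ∈ σ → u ++ [a, r u a] ∈ σ) :
    IsSkeletonOf A (responseSkeleton σ r) σ where
  nonempty := ⟨[], hσ.nil_mem, fun u a b _ h => by simpa using h.length_le⟩
  subset _ ht := ht.1
  causal t a b ht :=
    ⟨hσ.causal _ _ _ ht.1, fun u a' b' hu h =>
      ht.2 u a' b' hu (h.trans (List.prefix_append _ _))⟩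
  uniformization t a b hb ht := by
    have hev : Even t.length := hσ.even_length t ht.1
    refine ⟨r t a, ⟨hr t a b hb, fun u a' b' hu h => ?_⟩,
      fun c hc => hc.2 t a c hev (List.prefix_refl _)⟩
    rcases prefix_or_eq_of_append_pair_prefix hu hev h with h | h
    · exact ht.2 u a' b' hu h
    · obtain ⟨rfl, rfl, rfl⟩ := append_pair_inj h
      rfl

theorem exists_response_through (hσ : IsStrategy A σ) {s₀ : List A.M} (hs₀ : s₀ ∈ σ) :
    ∃ r : List A.M → A.M → A.M, (∀ u a b, u ++ [a, b] ∈ σ → u ++ [a, r u a] ∈ σ) ∧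
      ∀ u a b, u ++ [a, b] <+: s₀ → r u a = b := by
  have key : ∀ u a, ∃ c, (∀ b, u ++ [a, b] ∈ σ → u ++ [a, c] ∈ σ) ∧
      ∀ b, u ++ [a, b] <+: s₀ → c = b := by
    intro u a
    by_cases h₀ : ∃ c, u ++ [a, c] <+: s₀
    · obtain ⟨c, hc⟩ := h₀
      refine ⟨c, fun b hb => mem_of_prefix_of_even hσ.even_length hσ.causal hs₀ hc ?_,
        fun b hb => ?_⟩
      · simpa using hσ.even_length _ hb
      · exact (append_pair_inj ((List.prefix_of_prefix_length_le hc hb (by simp)).eq_of_length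
          (by simp))).2.2
    · by_cases h : ∃ c, u ++ [a, c] ∈ σ
      · obtain ⟨c, hc⟩ := h
        exact ⟨c, fun _ _ => hc, fun b hb => absurd ⟨b, hb⟩ h₀⟩
      · exact ⟨a, fun b hb => absurd ⟨b, hb⟩ h, fun b hb => absurd ⟨b, hb⟩ h₀⟩
  choose r hr using key
  exact ⟨r, fun u a b => (hr u a).1 b, fun u a b => (hr u a).2 b⟩

theorem exists_isSkeletonOf_mem (hσ : IsStrategy A σ) {s₀ : List A.M} (hs₀ : s₀ ∈ σ) :
    ∃ φ, IsSkeletonOf A φ σ ∧ s₀ ∈ φ := by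
  obtain ⟨r, hr, hrs₀⟩ := exists_response_through hσ hs₀
  exact ⟨_, isSkeletonOf_responseSkeleton hσ hr, hs₀, fun u a b _ h => (hrs₀ u a b h).symm⟩

theorem IsSkeleton.exists_equiv_of_subeq (hA : A.Valid) (hσ : IsStrategy A σ)
    (hφ : IsSkeletonOf A φ σ) (hψ : IsSkeleton A ψ) (hψφ : Subeq A ψ φ) {s : List A.M}
    (hs : s ∈ ψ) : ∃ t ∈ φ, A.equiv s t := by
  refine induction_of_even hψ.even_length hψ.causal ?_ (fun u a b hu ih => ?_) hs
  · have hnil := hφ.nil_mem hσ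
    exact ⟨[], hnil, hA.equiv_refl _ (hσ.subset_pos (hφ.subset hnil))⟩
  · obtain ⟨t, ht, hut⟩ := ih
    have hua : u ++ [a] ∈ A.pos := hA.pos_prefix_closed _ _ ⟨[b], by simp⟩ (hψ.subset_pos hu)
    obtain ⟨a', ha'⟩ := hA.equiv_ext _ _ a hut hua
    obtain ⟨b', hb', heq⟩ := hψφ u a b t a' hu ht ha'
    exact ⟨t ++ [a', b'], hb', heq⟩

theorem IsSkeleton.subset_of_subeq (hA : A.Valid) (hσ : IsStrategy A σ)
    (hφ : IsSkeletonOf A φ σ) (hψ : IsSkeleton A ψ) (hψφ : Subeq A ψ φ) : ψ ⊆ σ :=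
  fun _ hs =>
    have ⟨_, ht, heq⟩ := hψ.exists_equiv_of_subeq hA hσ hφ hψφ hs
    hσ.repind _ _ (hφ.subset ht) (hA.equiv_symm _ _ heq)

end Game

end AJM

open AJM Game in
/-- For any strategy `σ`: (1) any two skeletons of `σ` are `⊑`-equivalent;
(2) `σ` is the union of all its skeletons; (3) for any skeleton `φ` of `σ`,
`σ` is the union of all skeletons `ψ` that are `⊑`-equivalent to `φ`. -/
theorem skeletons_of_strategy (A : Game) (hA : A.Valid)
    (σ : Set (List A.M)) (hσ : IsStrategy A σ) :
    (∀ φ ψ, IsSkeletonOf A φ σ → IsSkeletonOf A ψ σ → Subeq A φ ψ ∧ Subeq A ψ φ) ∧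
    (σ = {s | ∃ φ, IsSkeletonOf A φ σ ∧ s ∈ φ}) ∧
    (∀ φ, IsSkeletonOf A φ σ →
      σ = {s | ∃ ψ, IsSkeleton A ψ ∧ Subeq A ψ φ ∧ Subeq A φ ψ ∧ s ∈ ψ}) := by
  have equiv_skeletons : ∀ φ ψ, IsSkeletonOf A φ σ → IsSkeletonOf A ψ σ →
      Subeq A φ ψ ∧ Subeq A ψ φ := fun φ ψ hφ hψ =>
    ⟨hφ.subeq hA hσ hψ, hψ.subeq hA hσ hφ⟩
  refine ⟨equiv_skeletons, ?_, fun φ hφ => ?_⟩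
  · ext s
    exact ⟨exists_isSkeletonOf_mem hσ, fun ⟨φ, hφ, hs⟩ => hφ.subset hs⟩
  · ext s
    constructor
    · intro hs
      obtain ⟨ψ, hψ, hsψ⟩ := exists_isSkeletonOf_mem hσ hs
      obtain ⟨hψφ, hφψ⟩ := equiv_skeletons ψ φ hψ hφ
      exact ⟨ψ, hψ.isSkeleton hA hσ, hψφ, hφψ, hsψ⟩
    · rintro ⟨ψ, hψ, hψφ, -, hs⟩
      exact hψ.subset_of_subeq hA hσ hφ hψφ hs
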